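/- arXiv:2310.19017 — 9 statements merged into one kernel-verified Lean document; each statement's English description precedes it below -/
import Mathlib

section
/- Let G be a finite abelian group and S = {s, s'} ⊆ G \ {0} with s ≠ s' a generating set of G (so that the Cayley digraph Cay(G,S) is strongly connected and 2-valent). Then Cay(G,S) admits a perfect code if and only if there exist integers m, l, h with m > 0, l > 0, 0 ≤ h < m, 3 ∣ m, 3 ∣ (l − h), and σ_p(gcd(m,h)) ∈ {σ_p(m), σ_p(m − h)} for every prime p dividing m·l, such that Cay(G,S) is isomorphic (as a digraph) to Γ_{m,l,h}. -/
/-- Arc relation of the Cayley digraph `Cay(G,S)`: `(x,y)` is an arc iff `y - x ∈ S`. -/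
def cayArc {G : Type*} [AddGroup G] (S : Set G) (x y : G) : Prop := y - x ∈ S

/-- `C` is a perfect code of the digraph with arc relation `arc`:
every vertex is dominated by exactly one element of `C`. -/
def IsPerfectCode {V : Type*} (arc : V → V → Prop) (C : Set V) : Prop :=
  ∀ v : V, ∃! u : V, u ∈ C ∧ (u = v ∨ arc u v)

/-- Arc relation of the digraph `Γ_{m,l,h}` on vertex set `ZMod m × Fin l`. -/
def gammaArc (m l h : ℕ) (x y : ZMod m × Fin l) : Prop :=
  (y.1 = x.1 + 1 ∧ y.2 = x.2) ∨
  (y.1 = x.1 ∧ (y.2 : ℕ) = (x.2 : ℕ) + 1) ∨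
  ((x.2 : ℕ) = l - 1 ∧ y.1 = x.1 - (h : ZMod m) ∧ (y.2 : ℕ) = 0)

/-- Two digraphs (given by their arc relations) are isomorphic. -/
def DigraphIso {V W : Type*} (arcV : V → V → Prop) (arcW : W → W → Prop) : Prop :=
  ∃ e : V ≃ W, ∀ x y : V, arcV x y ↔ arcW (e x) (e y)

/-- The set `C_r = {((3r + t + n(l-h)) mod m, t) : n ∈ ℤ, t ∈ [l]}`. -/
def Cr (m l h : ℕ) (r : ℕ) : Set (ZMod m × Fin l) :=
  {x | ∃ (n : ℤ) (t : Fin l),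
    x = (((3 * (r : ℤ) + (t : ℕ) + n * ((l : ℤ) - (h : ℤ))) : ZMod m), t)}

/-!
Let `m` be the order of `s` and `l` the order of `s'` modulo `⟨s⟩`, and pick `h < m` with
`h • s + l • s' = 0`. Then `(a, t) ↦ a • s + t • s'` identifies `Γ_{m,l,h}` with
`Cay(G, {s, s'})`: the in-neighbours of `(a, t)` are `(a - 1, t)` and `(a, t - 1)`, resp.
`(a + h, l - 1)` when `t = 0`.

A perfect code `C` of `Cay(G, {s, s'})` is a tiling `C ⊕ {0, s, s'} = G`, so for every character
`χ` the Fourier coefficient of `1_C` at `χ` times `1 + χ s + χ s'` vanishes unless `χ = 0`.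
As `1_C` is not constant, `1 + χ s + χ s' = 0` for some `χ`; two unit complex numbers summing
to `-1` are `ω, ω²` with `ω` a primitive cube root of unity. Hence `a • s + b • s' = 0` forces
`3 ∣ a + 2b`, which gives `3 ∣ m` and `3 ∣ l - h`. Conversely, if `3 ∣ m` and `3 ∣ l - h`, the
vertices with `a - t ≡ 0 (mod 3)` form a perfect code of `Γ_{m,l,h}`.

The `p`-adic condition always holds because `gcd(m, h) = gcd(m, m - h)`.
-/

lemma padicValNat_gcd {p a b : ℕ} (hp : p.Prime) (ha : a ≠ 0) (hb : b ≠ 0) :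
    padicValNat p (a.gcd b) = min (padicValNat p a) (padicValNat p b) := by
  rw [← Nat.factorization_def _ hp, ← Nat.factorization_def _ hp, ← Nat.factorization_def _ hp,
    Nat.factorization_gcd ha hb, Finsupp.inf_apply]

lemma padicValNat_gcd_eq_or {p m h : ℕ} (hp : p.Prime) (hhm : h < m) :
    padicValNat p (m.gcd h) = padicValNat p m ∨
      padicValNat p (m.gcd h) = padicValNat p (m - h) := by
  rw [← Nat.gcd_self_sub_right hhm.le, padicValNat_gcd hp (by omega) (by omega)]
  exact min_choice _ _

lemma isPerfectCode_cayArc_iff {G : Type*} [AddGroup G] (S : Set G) (C : Set G) :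
    IsPerfectCode (cayArc S) C ↔ ∀ v, ∃! c, c ∈ C ∧ v - c ∈ insert 0 S := by
  simp only [IsPerfectCode, cayArc, Set.mem_insert_iff, sub_eq_zero, eq_comm]

section Fourier

variable {G : Type*} [AddCommGroup G] [Fintype G]

lemma sum_sum_sub_mul_addChar (f : G → ℂ) (D : Finset G) (χ : AddChar G ℂ) :
    ∑ v, (∑ d ∈ D, f (v - d)) * χ v = (∑ d ∈ D, χ d) * ∑ v, f v * χ v := by
  simp_rw [Finset.sum_mul, Finset.mul_sum]
  rw [Finset.sum_comm]
  refine Finset.sum_congr rfl fun d _ => ?_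
  rw [← Equiv.sum_comp (Equiv.addRight d)]
  simp [AddChar.map_add_eq_mul, mul_comm, mul_left_comm]

lemma sum_addChar_sum_mul_addChar [DecidableEq G] (f : G → ℂ) :
    ∑ χ : AddChar G ℂ, ∑ v, f v * χ v = Fintype.card G * f 0 := by
  rw [Finset.sum_comm]
  simp_rw [← Finset.mul_sum, AddChar.sum_apply_eq_ite]
  simp [mul_comm]

lemma exists_addChar_sum_eq_zero_of_tiling {C : Set G} {D : Finset G} (hD : D.card ≠ 1)
    (htile : ∀ v, ∃! c, c ∈ C ∧ v - c ∈ D) : ∃ χ : AddChar G ℂ, ∑ d ∈ D, χ d = 0 := by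
  classical
  set f : G → ℂ := C.indicator 1
  have hf : ∀ v, ∑ d ∈ D, f (v - d) = 1 := by
    intro v
    obtain ⟨c, ⟨hc, hcD⟩, huniq⟩ := htile v
    rw [← if_pos hcD (t := (1 : ℂ)) (e := 0), ← Finset.sum_ite_eq D (v - c) fun _ => (1 : ℂ)]
    refine Finset.sum_congr rfl fun d hd => ?_
    by_cases hvd : v - d ∈ C
    · have : v - d = c := huniq _ ⟨hvd, by simpa using hd⟩
      simp [f, hvd, ← this]
    · have : v - c ≠ d := by rintro rfl; simp_all
      simp [f, hvd, this]
  by_contra! hχ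
  have hT : ∀ χ : AddChar G ℂ, χ ≠ 0 → ∑ v, f v * χ v = 0 := fun χ hχ0 => by
    have := sum_sum_sub_mul_addChar f D χ
    simp only [hf, one_mul, AddChar.sum_eq_zero_iff_ne_zero.2 hχ0] at this
    exact (mul_eq_zero.1 this.symm).resolve_left (hχ χ)
  have hsum : ∑ v, f v = Fintype.card G * f 0 := by
    simpa [Fintype.sum_eq_single 0 hT] using sum_addChar_sum_mul_addChar f
  have hcard : (D.card : ℂ) * ∑ v, f v = Fintype.card G := by
    simpa [hf] using (sum_sum_sub_mul_addChar f D 0).symm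
  have hD0 : (D.card : ℂ) * f 0 = 1 := by
    rw [hsum, mul_left_comm] at hcard
    exact mul_left_cancel₀ (by simp) (hcard.trans (mul_one _).symm)
  by_cases h0 : (0 : G) ∈ C
  · exact hD (by exact_mod_cast (by simpa [f, h0] using hD0 : (D.card : ℂ) = 1))
  · simp [f, h0] at hD0

end Fourier

lemma isPrimitiveRoot_three_of_one_add_add_eq_zero {x y : ℂ} (hx : ‖x‖ = 1) (hy : ‖y‖ = 1)
    (h : 1 + x + y = 0) : IsPrimitiveRoot x 3 ∧ y = x ^ 2 := by
  have hconj : ∀ z : ℂ, ‖z‖ = 1 → z * (starRingEnd ℂ) z = 1 := fun z hz => by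
    rw [Complex.mul_conj, Complex.normSq_eq_norm_sq, hz]; norm_num
  have hy' : y = -1 - x := by linear_combination h
  have hsum : x + (starRingEnd ℂ) x = -1 := by
    have := hconj y hy
    rw [hy', map_sub, map_neg, map_one] at this
    linear_combination this - hconj x hx
  have hq : x ^ 2 + x + 1 = 0 := by linear_combination x * hsum - hconj x hx
  have hx1 : x ≠ 1 := by rintro rfl; norm_num at hq
  have hx3 : x ^ 3 = 1 := by linear_combination (x - 1) * hq
  exact ⟨orderOf_eq_prime hx3 hx1 ▸ IsPrimitiveRoot.orderOf x, by linear_combination h - hq⟩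

lemma three_dvd_add_two_mul {G : Type*} [AddCommGroup G] [Finite G] {s s' : G}
    {χ : AddChar G ℂ} (hχ : 1 + χ s + χ s' = 0) {a b : ℕ} (hab : a • s + b • s' = 0) :
    3 ∣ a + 2 * b := by
  obtain ⟨hprim, hs'⟩ :=
    isPrimitiveRoot_three_of_one_add_add_eq_zero (χ.norm_apply s) (χ.norm_apply s') hχ
  rw [← hprim.pow_eq_one_iff_dvd, pow_add, pow_mul, ← hs', ← AddChar.map_nsmul_eq_pow,
    ← AddChar.map_nsmul_eq_pow, ← AddChar.map_add_eq_mul, hab, AddChar.map_zero_eq_one]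

lemma exists_addChar_one_add_add_eq_zero {G : Type*} [AddCommGroup G] [Fintype G] {s s' : G}
    (hs : s ≠ 0) (hs' : s' ≠ 0) (hne : s ≠ s') {C : Set G}
    (hC : IsPerfectCode (cayArc {s, s'}) C) : ∃ χ : AddChar G ℂ, 1 + χ s + χ s' = 0 := by
  classical
  have hD : ({0, s, s'} : Finset G).card = 3 :=
    Finset.card_eq_three.2 ⟨0, s, s', hs.symm, hs'.symm, hne, rfl⟩
  obtain ⟨χ, hχ⟩ := exists_addChar_sum_eq_zero_of_tiling (D := {0, s, s'}) (by omega)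
    (by simpa using (isPerfectCode_cayArc_iff _ C).1 hC)
  refine ⟨χ, ?_⟩
  rwa [Finset.sum_insert (by simp [hs.symm, hs'.symm]), Finset.sum_pair hne,
    AddChar.map_zero_eq_one, ← add_assoc] at hχ

section TwoPredecessors

variable {V : Type*} {arc : V → V → Prop} {p₁ p₂ : V → V}

lemma isPerfectCode_setOf_eq_zero (harc : ∀ u v, arc u v ↔ u = p₁ v ∨ u = p₂ v)
    {f : V → ZMod 3} (hf₁ : ∀ v, f (p₁ v) = f v - 1) (hf₂ : ∀ v, f (p₂ v) = f v + 1) :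
    IsPerfectCode arc {u | f u = 0} := by
  intro v
  simp only [harc, Set.mem_ofPred_eq]
  have hinj : ∀ u w, (u = v ∨ u = p₁ v ∨ u = p₂ v) → (w = v ∨ w = p₁ v ∨ w = p₂ v) →
      f u = f w → u = w := by
    rintro u w (hu | hu | hu) (hw | hw | hw) huw <;> rw [hu, hw] at huw ⊢ <;>
      simp only [hf₁, hf₂] at huw <;>
      first | rfl | (exfalso; revert huw; generalize f v = c; revert c; decide)
  have hzero : f v = 0 ∨ f (p₁ v) = 0 ∨ f (p₂ v) = 0 := by
    rw [hf₁, hf₂]; generalize f v = c; revert c; decide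
  obtain ⟨u, hu, hfu⟩ : ∃ u, (u = v ∨ u = p₁ v ∨ u = p₂ v) ∧ f u = 0 := by
    rcases hzero with h | h | h
    exacts [⟨_, .inl rfl, h⟩, ⟨_, .inr (.inl rfl), h⟩, ⟨_, .inr (.inr rfl), h⟩]
  exact ⟨u, ⟨hfu, hu⟩, fun w ⟨hfw, hw⟩ => hinj w u hw hu (hfw.trans hfu.symm)⟩

lemma digraphIso_cayArc_pair {G : Type*} [AddCommGroup G] {s s' : G}
    (harc : ∀ u v, arc u v ↔ u = p₁ v ∨ u = p₂ v) (e : V ≃ G)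
    (he₁ : ∀ v, e (p₁ v) = e v - s) (he₂ : ∀ v, e (p₂ v) = e v - s') :
    DigraphIso (cayArc {s, s'}) arc := by
  refine ⟨e.symm, fun x y => ?_⟩
  rw [harc, ← e.apply_eq_iff_eq, ← e.apply_eq_iff_eq (y := p₂ _), he₁, he₂]
  simp only [cayArc, Set.mem_insert_iff, Set.mem_singleton_iff, Equiv.apply_symm_apply,
    sub_eq_iff_eq_add, eq_sub_iff_add_eq', eq_comm (b := y)]

end TwoPredecessors

lemma DigraphIso.exists_isPerfectCode {V W : Type*} {arcV : V → V → Prop} {arcW : W → W → Prop}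
    (hiso : DigraphIso arcV arcW) (hW : ∃ C, IsPerfectCode arcW C) :
    ∃ C, IsPerfectCode arcV C := by
  obtain ⟨e, he⟩ := hiso
  obtain ⟨C, hC⟩ := hW
  refine ⟨e ⁻¹' C, fun v => (e.existsUnique_congr fun u => ?_).2 (hC (e v))⟩
  simp [he, e.apply_eq_iff_eq]

def gammaPrevSnd (m l h : ℕ) (v : ZMod m × Fin l) : ZMod m × Fin l :=
  if hv : (v.2 : ℕ) = 0 then (v.1 + h, ⟨l - 1, by omega⟩) else (v.1, ⟨v.2 - 1, by omega⟩)

lemma gammaArc_iff {m l h : ℕ} {u v : ZMod m × Fin l} :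
    gammaArc m l h u v ↔ u = (v.1 - 1, v.2) ∨ u = gammaPrevSnd m l h v := by
  obtain ⟨a, t⟩ := u
  obtain ⟨b, r⟩ := v
  unfold gammaArc gammaPrevSnd
  split_ifs <;> simp only [Prod.ext_iff, Fin.ext_iff] <;> grind

lemma exists_isPerfectCode_gammaArc {m l h : ℕ} (hm : 3 ∣ m) (hlh : (3 : ℤ) ∣ (l : ℤ) - h) :
    ∃ C, IsPerfectCode (gammaArc m l h) C := by
  refine ⟨_, isPerfectCode_setOf_eq_zero (fun _ _ => gammaArc_iff)
    (f := fun v => ZMod.castHom hm (ZMod 3) v.1 - (v.2 : ℕ)) (fun v => ?_) (fun v => ?_)⟩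
  · simp only [map_sub, map_one]; ring
  · obtain ⟨a, t⟩ := v
    have hlh' : ((l : ℤ) - h : ZMod 3) = 0 := by
      exact_mod_cast (ZMod.intCast_zmod_eq_zero_iff_dvd _ 3).2 hlh
    unfold gammaPrevSnd
    split_ifs with ht <;> dsimp only at ht ⊢
    · simp only [ht, map_add, map_natCast, Nat.cast_pred (Nat.zero_lt_of_lt t.isLt)]
      push_cast at hlh' ⊢
      linear_combination -hlh'
    · simp only [Nat.cast_pred (Nat.pos_of_ne_zero ht)]
      ring

section CyclicDecomposition

variable {G : Type*} [AddCommGroup G]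

noncomputable def zmodMultiplesHom (s : G) : ZMod (addOrderOf s) →+ G :=
  ZMod.lift _ ⟨zmultiplesHom G s, by simp [addOrderOf_nsmul_eq_zero]⟩

lemma zmodMultiplesHom_intCast (s : G) (k : ℤ) : zmodMultiplesHom s k = k • s :=
  ZMod.lift_coe _ _ k

lemma zmodMultiplesHom_natCast (s : G) (n : ℕ) : zmodMultiplesHom s n = n • s := by
  simpa using zmodMultiplesHom_intCast s n

lemma zmodMultiplesHom_injective (s : G) : Function.Injective (zmodMultiplesHom s) :=
  (ZMod.lift_injective _).2 fun _ hk =>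
    (ZMod.intCast_zmod_eq_zero_iff_dvd _ _).2 (addOrderOf_dvd_iff_zsmul_eq_zero.2 hk)

lemma range_zmodMultiplesHom (s : G) :
    (zmodMultiplesHom s).range = AddSubgroup.zmultiples s := by
  ext x
  simp [AddSubgroup.mem_zmultiples_iff, ZMod.intCast_surjective.exists, zmodMultiplesHom_intCast]

variable {s s' : G}

lemma zmultiples_mk_eq_top (hgen : AddSubgroup.closure {s, s'} = ⊤) :
    AddSubgroup.zmultiples (s' : G ⧸ AddSubgroup.zmultiples s) = ⊤ := by
  have := AddMonoidHom.map_closure (QuotientAddGroup.mk' (AddSubgroup.zmultiples s)) {s, s'}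
  rw [hgen, AddSubgroup.map_top_of_surjective _ (QuotientAddGroup.mk'_surjective _),
    Set.image_pair, QuotientAddGroup.mk'_apply, QuotientAddGroup.mk'_apply,
    (QuotientAddGroup.eq_zero_iff s).2 (AddSubgroup.mem_zmultiples s),
    AddSubgroup.closure_insert_zero, ← AddSubgroup.zmultiples_eq_closure] at this
  exact this.symm

lemma card_eq_addOrderOf_mul_addOrderOf (hgen : AddSubgroup.closure {s, s'} = ⊤) :
    Nat.card G = addOrderOf s * addOrderOf (s' : G ⧸ AddSubgroup.zmultiples s) := by
  rw [AddSubgroup.card_eq_card_quotient_mul_card_addSubgroup (AddSubgroup.zmultiples s),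
    Nat.card_zmultiples, ← Nat.card_zmultiples (s' : G ⧸ AddSubgroup.zmultiples s),
    zmultiples_mk_eq_top hgen, AddSubgroup.card_top, mul_comm]

variable (s s') in
noncomputable def gammaToCay (l : ℕ) (v : ZMod (addOrderOf s) × Fin l) : G :=
  zmodMultiplesHom s v.1 + (v.2 : ℕ) • s'

lemma gammaToCay_injective :
    Function.Injective (gammaToCay s s' (addOrderOf (s' : G ⧸ AddSubgroup.zmultiples s))) := by
  rintro ⟨a, t⟩ ⟨b, r⟩ hab
  have hmk : ∀ c, (zmodMultiplesHom s c : G ⧸ AddSubgroup.zmultiples s) = 0 := fun c =>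
    (QuotientAddGroup.eq_zero_iff _).2 <|
      range_zmodMultiplesHom s ▸ AddMonoidHom.mem_range.2 ⟨c, rfl⟩
  have htr : t = r := by
    have := congrArg (QuotientAddGroup.mk (s := AddSubgroup.zmultiples s)) hab
    simp only [gammaToCay, QuotientAddGroup.mk_add, QuotientAddGroup.mk_nsmul, hmk,
      zero_add] at this
    exact Fin.ext (nsmul_injOn_Iio_addOrderOf t.isLt r.isLt this)
  subst htr
  exact Prod.ext (zmodMultiplesHom_injective s (add_right_cancel hab)) rfl

lemma gammaToCay_sub_one (l : ℕ) (v : ZMod (addOrderOf s) × Fin l) :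
    gammaToCay s s' l (v.1 - 1, v.2) = gammaToCay s s' l v - s := by
  have h1 := zmodMultiplesHom_natCast s 1
  rw [Nat.cast_one, one_smul] at h1
  simp only [gammaToCay, map_sub, h1]
  abel

lemma gammaToCay_gammaPrevSnd {l h : ℕ} (hrel : h • s + l • s' = 0)
    (v : ZMod (addOrderOf s) × Fin l) :
    gammaToCay s s' l (gammaPrevSnd _ l h v) = gammaToCay s s' l v - s' := by
  obtain ⟨a, t⟩ := v
  unfold gammaPrevSnd
  split_ifs with ht <;> dsimp only at ht ⊢
  · have hl : l = (l - 1) + 1 := by have := t.isLt; omega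
    rw [hl, succ_nsmul] at hrel
    simp only [gammaToCay, map_add, zmodMultiplesHom_natCast, ht, zero_smul, add_zero]
    linear_combination (norm := module) hrel
  · have ht' : (t : ℕ) • s' = ((t : ℕ) - 1) • s' + s' := by
      rw [← succ_nsmul, Nat.sub_add_cancel (Nat.pos_of_ne_zero ht)]
    simp only [gammaToCay, ht']
    abel

lemma exists_digraphIso_gammaArc [Finite G] (hgen : AddSubgroup.closure {s, s'} = ⊤) :
    ∃ m l h : ℕ, 0 < m ∧ 0 < l ∧ h < m ∧ m • s = 0 ∧ h • s + l • s' = 0 ∧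
      DigraphIso (cayArc {s, s'}) (gammaArc m l h) := by
  set q : G ⧸ AddSubgroup.zmultiples s := (s' : G ⧸ AddSubgroup.zmultiples s)
  have : NeZero (addOrderOf s) := ⟨(addOrderOf_pos s).ne'⟩
  obtain ⟨a, ha⟩ : -(addOrderOf q • s') ∈ (zmodMultiplesHom s).range := by
    rw [range_zmodMultiplesHom, neg_mem_iff, ← QuotientAddGroup.eq_zero_iff,
      QuotientAddGroup.mk_nsmul]
    exact addOrderOf_nsmul_eq_zero q
  have hrel : a.val • s + addOrderOf q • s' = 0 := by
    rw [← zmodMultiplesHom_natCast, ZMod.natCast_zmod_val, ha, neg_add_cancel]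
  have hbij : Function.Bijective (gammaToCay s s' (addOrderOf q)) :=
    (Nat.bijective_iff_injective_and_card _).2 ⟨gammaToCay_injective,
      by simp [card_eq_addOrderOf_mul_addOrderOf hgen, q]⟩
  exact ⟨addOrderOf s, addOrderOf q, a.val, addOrderOf_pos s, addOrderOf_pos q, a.val_lt,
    addOrderOf_nsmul_eq_zero s, hrel, digraphIso_cayArc_pair (fun _ _ => gammaArc_iff)
      (Equiv.ofBijective _ hbij) (gammaToCay_sub_one _) (gammaToCay_gammaPrevSnd hrel)⟩

end CyclicDecomposition

theorem statement0 {G : Type*} [AddCommGroup G] [Fintype G] (s s' : G)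
    (hs : s ≠ 0) (hs' : s' ≠ 0) (hne : s ≠ s')
    (hgen : AddSubgroup.closure {s, s'} = ⊤) :
    (∃ C : Set G, IsPerfectCode (cayArc {s, s'}) C) ↔
      ∃ m l h : ℕ, 0 < m ∧ 0 < l ∧ h < m ∧ 3 ∣ m ∧ (3 : ℤ) ∣ ((l : ℤ) - (h : ℤ)) ∧
        (∀ p : ℕ, p.Prime → p ∣ m * l →
          padicValNat p (Nat.gcd m h) = padicValNat p m ∨
          padicValNat p (Nat.gcd m h) = padicValNat p (m - h)) ∧
        DigraphIso (cayArc {s, s'}) (gammaArc m l h) := by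
  constructor
  · rintro ⟨C, hC⟩
    obtain ⟨χ, hχ⟩ := exists_addChar_one_add_add_eq_zero hs hs' hne hC
    obtain ⟨m, l, h, hm, hl, hhm, hms, hrel, hiso⟩ := exists_digraphIso_gammaArc hgen
    have h3m : 3 ∣ m := by simpa using three_dvd_add_two_mul hχ (b := 0) (by simpa using hms)
    have h3hl : (3 : ℤ) ∣ h + 2 * l := by exact_mod_cast three_dvd_add_two_mul hχ hrel
    exact ⟨m, l, h, hm, hl, hhm, h3m, by omega, fun p hp _ => padicValNat_gcd_eq_or hp hhm, hiso⟩
  · rintro ⟨m, l, h, -, -, -, hm, hlh, -, hiso⟩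
    exact hiso.exists_isPerfectCode (exists_isPerfectCode_gammaArc hm hlh)
end

section
/- Let G be a finite abelian group generated by S = {s, s'} ⊆ G \ {0} with s ≠ s', let m be the order of s, let l be the minimal positive integer with l·s' ∈ ⟨s⟩, and let h be the unique integer with 0 ≤ h < m and h·s + l·s' = 0. If C is a perfect code of the Cayley digraph Cay(G,S) with 0 ∈ C, then C = ⋃_{i ∈ {0,1,…,gcd(l−h,m)/3 − 1}} D(i), where D(i) = {(3i + r)·s + r·s' : r ∈ ℤ}. -/
/-!
A perfect code `C` of `Cay(G, {s, s'})` through `0` is invariant under translation by `s + s'`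
(the vertex `c + s + s'` can only be dominated by itself) and by `3 • s` (the vertex `c + 2 • s`
can only be dominated by `c + 2 • s - s'`). Since moreover `c + s` and `c + 2 • s` are never in
`C`, a point `a • s + b • s'` lies in `C` exactly when `3 ∣ a - b`. Finally `h • s + l • s' = 0`
gives `(l - h) • s = l • (s + s')`, so by Bézout `gcd(l - h, m) • s` is a multiple of `s + s'`;
hence `3 ∣ gcd(l - h, m)` and the classes `D(i)` repeat with period `gcd(l - h, m) / 3` in `i`.
-/

theorem IsPerfectCode.eq_of_dominate {V : Type*} {arc : V → V → Prop} {C : Set V}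
    (hC : IsPerfectCode arc C) {u₁ u₂ v : V} (h₁ : u₁ ∈ C) (h₂ : u₂ ∈ C)
    (d₁ : u₁ = v ∨ arc u₁ v) (d₂ : u₂ = v ∨ arc u₂ v) : u₁ = u₂ :=
  (hC v).unique ⟨h₁, d₁⟩ ⟨h₂, d₂⟩

theorem Set.add_zsmul_mem_of_forall_add_mem {G : Type*} [AddGroup G] {C : Set G} {t : G}
    (ht : IsOfFinAddOrder t) (h : ∀ c ∈ C, c + t ∈ C) {c : G} (hc : c ∈ C) (n : ℤ) :
    c + n • t ∈ C := by
  obtain ⟨k, hk⟩ := ht.mem_multiples_iff_mem_zmultiples.2 (AddSubgroup.zsmul_mem_zmultiples t n)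
  rw [← hk]
  clear hk
  induction k with
  | zero => simpa using hc
  | succ k ih => simpa [succ_nsmul, ← add_assoc] using h _ ih

section CayleyPair

variable {G : Type*} [AddCommGroup G] {s s' c : G} {C : Set G}

theorem cayArc_pair_iff {x y : G} : cayArc {s, s'} x y ↔ x = y - s ∨ x = y - s' := by
  simp only [cayArc, Set.mem_insert_iff, Set.mem_singleton_iff, eq_sub_iff_add_eq,
    sub_eq_iff_eq_add', eq_comm (a := y)]

theorem IsPerfectCode.add_notMem {S : Set G} (hC : IsPerfectCode (cayArc S) C) {a : G}
    (ha : a ∈ S) (ha0 : a ≠ 0) (hc : c ∈ C) : c + a ∉ C := fun hca ↦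
  ha0 <| left_eq_add.1 <| hC.eq_of_dominate hc hca
    (Or.inr (by simpa [cayArc] using ha)) (Or.inl rfl)

theorem IsPerfectCode.add_add_mem (hC : IsPerfectCode (cayArc {s, s'}) C) (hs : s ≠ 0)
    (hs' : s' ≠ 0) (hc : c ∈ C) : c + (s + s') ∈ C := by
  obtain ⟨u, ⟨hu, hdom⟩, -⟩ := hC (c + (s + s'))
  rcases hdom with rfl | hdom
  · exact hu
  rw [cayArc_pair_iff] at hdom
  rcases hdom with rfl | rfl
  · exact absurd (by simpa [add_comm s, ← add_assoc] using hu)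
      (hC.add_notMem (by simp) hs' hc)
  · exact absurd (by simpa [← add_assoc] using hu) (hC.add_notMem (by simp) hs hc)

variable [Finite G]

theorem IsPerfectCode.add_two_nsmul_notMem (hC : IsPerfectCode (cayArc {s, s'}) C)
    (hs : s ≠ 0) (hs' : s' ≠ 0) (hne : s ≠ s') (hc : c ∈ C) : c + 2 • s ∉ C := by
  intro h2
  -- `c + s - s'` and `c` would both dominate `c + s`
  have hmem : c + (s - s') ∈ C := by
    convert Set.add_zsmul_mem_of_forall_add_mem (isOfFinAddOrder_of_finite _)
      (fun _ ↦ hC.add_add_mem hs hs') h2 (-1) using 1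
    module
  have hsame := hC.eq_of_dominate (v := c + s) hmem hc
    (Or.inr (cayArc_pair_iff.2 (Or.inr (by abel)))) (Or.inr (cayArc_pair_iff.2 (Or.inl (by abel))))
  exact hne (sub_eq_zero.1 (add_eq_left.1 hsame))

theorem IsPerfectCode.add_three_nsmul_mem (hC : IsPerfectCode (cayArc {s, s'}) C)
    (hs : s ≠ 0) (hs' : s' ≠ 0) (hne : s ≠ s') (hc : c ∈ C) : c + 3 • s ∈ C := by
  obtain ⟨u, ⟨hu, hdom⟩, -⟩ := hC (c + 2 • s)
  rcases hdom with rfl | hdom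
  · exact absurd hu (hC.add_two_nsmul_notMem hs hs' hne hc)
  rw [cayArc_pair_iff] at hdom
  rcases hdom with rfl | rfl
  · exact absurd (by simpa [two_nsmul, ← add_assoc] using hu) (hC.add_notMem (by simp) hs hc)
  · convert hC.add_add_mem hs hs' hu using 1
    module

theorem IsPerfectCode.zsmul_mem_iff (hC : IsPerfectCode (cayArc {s, s'}) C) (hs : s ≠ 0)
    (hs' : s' ≠ 0) (hne : s ≠ s') (h0 : 0 ∈ C) (d : ℤ) : d • s ∈ C ↔ 3 ∣ d := by
  have hmul (j : ℤ) : (3 * j) • s ∈ C := by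
    convert Set.add_zsmul_mem_of_forall_add_mem (isOfFinAddOrder_of_finite _)
      (fun _ ↦ hC.add_three_nsmul_mem hs hs' hne) h0 j using 1
    module
  refine ⟨fun hd ↦ ?_, fun ⟨j, hj⟩ ↦ hj ▸ hmul j⟩
  obtain ⟨j, hj | hj | hj⟩ : ∃ j, d = 3 * j ∨ d = 3 * j + 1 ∨ d = 3 * j + 2 :=
    ⟨d / 3, by omega⟩
  · exact ⟨j, hj⟩
  · refine absurd ?_ (hC.add_notMem (by simp) hs (hmul j))
    simpa [hj, add_zsmul] using hd
  · refine absurd ?_ (hC.add_two_nsmul_notMem hs hs' hne (hmul j))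
    simpa [hj, add_zsmul, ← natCast_zsmul] using hd

theorem IsPerfectCode.mem_iff (hC : IsPerfectCode (cayArc {s, s'}) C) (hs : s ≠ 0)
    (hs' : s' ≠ 0) (hne : s ≠ s') (hgen : AddSubgroup.closure {s, s'} = ⊤) (h0 : 0 ∈ C)
    {x : G} : x ∈ C ↔ ∃ j r : ℤ, x = (3 * j + r) • s + r • s' := by
  have hshift (y : G) (hy : y ∈ C) (n : ℤ) : y + n • (s + s') ∈ C :=
    Set.add_zsmul_mem_of_forall_add_mem (isOfFinAddOrder_of_finite _)
      (fun _ ↦ hC.add_add_mem hs hs') hy n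
  constructor
  · intro hx
    obtain ⟨a, b, rfl⟩ := AddSubgroup.mem_closure_pair.1 (hgen ▸ AddSubgroup.mem_top x)
    obtain ⟨j, hj⟩ := (hC.zsmul_mem_iff hs hs' hne h0 (a - b)).1 <| by
      convert hshift _ hx (-b) using 1
      module
    exact ⟨j, b, by rw [← hj]; module⟩
  · rintro ⟨j, r, rfl⟩
    convert hshift _ ((hC.zsmul_mem_iff hs hs' hne h0 (3 * j)).2 ⟨j, rfl⟩) r using 1
    module

end CayleyPair

theorem AddSubgroup.gcd_zsmul_mem {G : Type*} [AddCommGroup G] {H : AddSubgroup G} {x : G}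
    {a b : ℤ} (ha : a • x ∈ H) (hb : b • x ∈ H) : (Int.gcd a b : ℤ) • x ∈ H := by
  rw [Int.gcd_eq_gcd_ab, add_zsmul, mul_comm a, mul_comm b, mul_zsmul, mul_zsmul]
  exact add_mem (zsmul_mem ha _) (zsmul_mem hb _)

theorem exists_lt_of_three_mul_zsmul_mem_zmultiples {G : Type*} [AddCommGroup G] {s s' x : G}
    {k : ℕ} (hk0 : 0 < k) (hk : (3 * (k : ℤ)) • s ∈ AddSubgroup.zmultiples (s + s'))
    (hx : ∃ j r : ℤ, x = (3 * j + r) • s + r • s') :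
    ∃ i < k, ∃ r : ℤ, x = (3 * (i : ℤ) + r) • s + r • s' := by
  obtain ⟨w, hw⟩ := hk
  obtain ⟨j, r, rfl⟩ := hx
  have hk0' : (0 : ℤ) < k := by exact_mod_cast hk0
  have hlt := Int.emod_lt_of_pos j hk0'
  have hnonneg := Int.emod_nonneg j hk0'.ne'
  have hj := Int.emod_add_mul_ediv j k
  generalize j % k = ρ at *
  generalize j / k = q at *
  subst hj
  refine ⟨ρ.toNat, by omega, r + q * w, ?_⟩
  rw [Int.toNat_of_nonneg hnonneg]
  have hshift : (3 * (k : ℤ) * q) • s = (q * w) • (s + s') := by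
    rw [mul_comm, mul_zsmul, ← hw, ← mul_zsmul]
  calc (3 * (ρ + k * q) + r) • s + r • s'
      = (3 * ρ + r) • s + r • s' + (3 * (k : ℤ) * q) • s := by module
    _ = (3 * ρ + (r + q * w)) • s + (r + q * w) • s' := by rw [hshift]; module

theorem statement1_general {G : Type*} [AddCommGroup G] [Fintype G] (s s' : G)
    (hs : s ≠ 0) (hs' : s' ≠ 0) (hne : s ≠ s')
    (hgen : AddSubgroup.closure {s, s'} = ⊤)
    (m l h : ℕ) (hm : m = addOrderOf s)
    (hh : (h : ℤ) • s + (l : ℤ) • s' = 0)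
    (C : Set G) (hC : IsPerfectCode (cayArc {s, s'}) C) (h0 : (0 : G) ∈ C) :
    C = ⋃ i ∈ Finset.range (Int.gcd ((l : ℤ) - (h : ℤ)) (m : ℤ) / 3),
          {x : G | ∃ r : ℤ, x = (3 * (i : ℤ) + r) • s + r • s'} := by
  set g := Int.gcd ((l : ℤ) - (h : ℤ)) (m : ℤ)
  have hg : (g : ℤ) • s ∈ AddSubgroup.zmultiples (s + s') := by
    refine AddSubgroup.gcd_zsmul_mem ⟨l, ?_⟩ ⟨0, ?_⟩
    · show (l : ℤ) • (s + s') = ((l : ℤ) - h) • s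
      linear_combination (norm := module) hh
    · show (0 : ℤ) • (s + s') = (m : ℤ) • s
      rw [zero_smul, hm, natCast_zsmul, addOrderOf_nsmul_eq_zero]
  have hgpos : 0 < g := Int.gcd_pos_of_ne_zero_right _ (by simp [hm, addOrderOf_pos s |>.ne'])
  have h3 : (3 : ℤ) ∣ g := by
    obtain ⟨w, hw⟩ := hg
    rw [← hC.zsmul_mem_iff hs hs' hne h0, ← hw]
    exact (hC.mem_iff hs hs' hne hgen h0).2 ⟨0, w, by module⟩
  ext x
  simp only [Set.mem_iUnion, Finset.mem_range, Set.mem_ofPred_eq, exists_prop,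
    hC.mem_iff hs hs' hne hgen h0]
  refine ⟨exists_lt_of_three_mul_zsmul_mem_zmultiples (by omega) (by convert hg using 2; omega),
    fun ⟨i, _, r, hx⟩ ↦ ⟨i, r, hx⟩⟩

theorem statement1 {G : Type*} [AddCommGroup G] [Fintype G] (s s' : G)
    (hs : s ≠ 0) (hs' : s' ≠ 0) (hne : s ≠ s')
    (hgen : AddSubgroup.closure {s, s'} = ⊤)
    (m l h : ℕ) (hm : m = addOrderOf s)
    (hl : IsLeast {n : ℕ | 0 < n ∧ (n : ℤ) • s' ∈ AddSubgroup.zmultiples s} l)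
    (hhm : h < m) (hh : (h : ℤ) • s + (l : ℤ) • s' = 0)
    (C : Set G) (hC : IsPerfectCode (cayArc {s, s'}) C) (h0 : (0 : G) ∈ C) :
    C = ⋃ i ∈ Finset.range (Int.gcd ((l : ℤ) - (h : ℤ)) (m : ℤ) / 3),
          {x : G | ∃ r : ℤ, x = (3 * (i : ℤ) + r) • s + r • s'} :=
  statement1_general s s' hs hs' hne hgen m l h hm hh C hC h0
end

section
/- Let m, l be positive integers and h an integer with 0 ≤ h < m such that 3 ∣ m and 3 ∣ (l − h), and set b = gcd(l − h, m). Then the set C = ⋃_{r ∈ {0,1,…,b/3 − 1}} C_r, where C_r = {((3r + t + n(l − h)) mod m, t) : n ∈ ℤ, t ∈ {0,…,l−1}} ⊆ ℤ_m × {0,…,l−1}, is a perfect code of Γ_{m,l,h}. -/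
lemma exists_eq_natCast_mul_add_intCast_mul_iff {m k : ℕ} [NeZero m] (hk : k ∣ m) {d : ℤ}
    (hkd : (k : ℤ) ∣ d) (a : ZMod m) :
    (∃ r < Int.gcd d m / k, ∃ n : ℤ, a = k * r + n * d) ↔ ZMod.castHom hk (ZMod k) a = 0 := by
  constructor
  · rintro ⟨r, -, n, rfl⟩
    simp only [map_add, map_mul, map_natCast, map_intCast, ZMod.natCast_self,
      (ZMod.intCast_zmod_eq_zero_iff_dvd d k).mpr hkd, zero_mul, mul_zero, add_zero]
  · intro ha
    set b := Int.gcd d m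
    have hb : 0 < b := Int.gcd_pos_of_ne_zero_right _ (by exact_mod_cast NeZero.ne m)
    have hkb : k ∣ b := Int.natCast_dvd_natCast.mp (Int.dvd_coe_gcd hkd (by exact_mod_cast hk))
    have hka : k ∣ a.val := by
      rwa [← ZMod.natCast_zmod_val a, map_natCast, ZMod.natCast_eq_zero_iff] at ha
    have hbd : (b : ZMod m) = (Int.gcdA d m : ZMod m) * d := by
      have := congrArg (Int.cast : ℤ → ZMod m) (Int.gcd_eq_gcd_ab d m)
      push_cast at this
      rw [this, ZMod.natCast_self]; ring
    have hrem : k ∣ a.val % b := (Nat.dvd_mod_iff hkb).mpr hka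
    refine ⟨a.val % b / k, Nat.div_lt_div_of_lt_of_dvd hkb (Nat.mod_lt _ hb),
      (a.val / b : ℕ) * Int.gcdA d m, ?_⟩
    calc a = ((k * (a.val % b / k) + b * (a.val / b) : ℕ) : ZMod m) := by
          rw [Nat.mul_div_cancel' hrem, Nat.mod_add_div, ZMod.natCast_zmod_val]
      _ = _ := by
          rw [Nat.cast_add, Nat.cast_mul, Nat.cast_mul, hbd, Int.cast_mul, Int.cast_natCast]
          ring

lemma isPerfectCode_of_label_mod_three {V : Type*} {arc : V → V → Prop} (φ : V → ZMod 3)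
    (d₁ d₂ : V → V) (hdom : ∀ u v, (u = v ∨ arc u v) ↔ u = v ∨ u = d₁ v ∨ u = d₂ v)
    (h₁ : ∀ v, φ (d₁ v) = φ v - 1) (h₂ : ∀ v, φ (d₂ v) = φ v + 1) :
    IsPerfectCode arc {u | φ u = 0} := by
  intro v
  simp only [Set.mem_ofPred_eq, hdom]
  rcases (by decide : ∀ x : ZMod 3, x = 0 ∨ x = 1 ∨ x = 2) (φ v) with hv | hv | hv
  · refine ⟨v, ⟨hv, .inl rfl⟩, ?_⟩
    rintro u ⟨hu, rfl | rfl | rfl⟩ <;> grind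
  · refine ⟨d₁ v, ⟨by grind, .inr (.inl rfl)⟩, ?_⟩
    rintro u ⟨hu, rfl | rfl | rfl⟩ <;> grind
  · refine ⟨d₂ v, ⟨by grind, .inr (.inr rfl)⟩, ?_⟩
    rintro u ⟨hu, rfl | rfl | rfl⟩ <;> grind

section Gamma

variable {m l : ℕ}

def gammaLevelPred (h : ℕ) (v : ZMod m × Fin l) : ZMod m × Fin l :=
  if (v.2 : ℕ) = 0 then (v.1 + h, ⟨l - 1, by have := v.2.isLt; omega⟩)
  else (v.1, ⟨v.2 - 1, by omega⟩)

lemma eq_or_gammaArc_iff (h : ℕ) (u v : ZMod m × Fin l) :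
    (u = v ∨ gammaArc m l h u v) ↔ u = v ∨ u = (v.1 - 1, v.2) ∨ u = gammaLevelPred h v := by
  obtain ⟨a, t⟩ := u
  obtain ⟨b, s, hs⟩ := v
  simp only [gammaArc, gammaLevelPred, Prod.ext_iff, Fin.ext_iff]
  split_ifs with hs0 <;> grind

def gammaLabel (h3m : 3 ∣ m) (x : ZMod m × Fin l) : ZMod 3 :=
  ZMod.castHom h3m (ZMod 3) (x.1 - ((x.2 : ℕ) : ZMod m))

lemma gammaLabel_sub_one (h3m : 3 ∣ m) (v : ZMod m × Fin l) :
    gammaLabel h3m (v.1 - 1, v.2) = gammaLabel h3m v - 1 := by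
  simp only [gammaLabel, map_sub, map_one]
  ring

lemma gammaLabel_gammaLevelPred (h3m : 3 ∣ m) {h : ℕ} (h3 : (3 : ℤ) ∣ (l : ℤ) - h)
    (v : ZMod m × Fin l) : gammaLabel h3m (gammaLevelPred h v) = gammaLabel h3m v + 1 := by
  have hlh : (l : ZMod 3) - h = 0 := by
    simpa using (ZMod.intCast_zmod_eq_zero_iff_dvd _ 3).mpr h3
  unfold gammaLevelPred
  split_ifs with hv
  · simp only [gammaLabel, map_sub, map_add, hv, Nat.cast_zero, map_zero, map_natCast]
    rw [Nat.cast_sub (by omega : 1 ≤ l)]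
    linear_combination -hlh
  · simp only [gammaLabel, map_sub, map_natCast]
    rw [Nat.cast_sub (by omega : 1 ≤ (v.2 : ℕ))]
    ring

lemma iUnion_Cr_eq {h : ℕ} [NeZero m] (h3m : 3 ∣ m) (h3 : (3 : ℤ) ∣ (l : ℤ) - h) :
    ⋃ r ∈ Finset.range (Int.gcd ((l : ℤ) - h) m / 3), Cr m l h r =
      {x | gammaLabel h3m x = 0} := by
  ext x
  rw [Set.mem_ofPred_eq, gammaLabel, ← exists_eq_natCast_mul_add_intCast_mul_iff h3m h3]
  simp only [Set.mem_iUnion, Finset.mem_range, Cr, Set.mem_ofPred_eq, exists_prop, Prod.ext_iff,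
    exists_eq_right']
  refine exists_congr fun r => and_congr_right' <| exists_congr fun n => ?_
  push_cast
  rw [sub_eq_iff_eq_add]
  constructor <;> intro hx <;> linear_combination hx

end Gamma

theorem statement3_general (m l h : ℕ) (hm : 0 < m) (h3m : 3 ∣ m) (h3 : (3 : ℤ) ∣ ((l : ℤ) - (h : ℤ))) :
    IsPerfectCode (gammaArc m l h)
      (⋃ r ∈ Finset.range (Int.gcd ((l : ℤ) - (h : ℤ)) (m : ℤ) / 3), Cr m l h r) := by
  have : NeZero m := ⟨hm.ne'⟩
  rw [iUnion_Cr_eq h3m h3]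
  exact isPerfectCode_of_label_mod_three _ _ _ (eq_or_gammaArc_iff h)
    (gammaLabel_sub_one h3m) (gammaLabel_gammaLevelPred h3m h3)

theorem statement3 (m l h : ℕ) (hm : 0 < m) (hl : 0 < l) (hhm : h < m)
    (h3m : 3 ∣ m) (h3 : (3 : ℤ) ∣ ((l : ℤ) - (h : ℤ))) :
    IsPerfectCode (gammaArc m l h)
      (⋃ r ∈ Finset.range (Int.gcd ((l : ℤ) - (h : ℤ)) (m : ℤ) / 3), Cr m l h r) :=
  statement3_general m l h hm h3m h3
end

section
/- Let G be a finite abelian group generated by S = {s, s'} ⊆ G \ {0} with s ≠ s'. If the Cayley digraph Cay(G,S) admits a perfect code, then S contains no involution; that is, neither s nor s' has order 2. -/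
theorem IsPerfectCode.eq_of_dominates {V : Type*} {arc : V → V → Prop} {C : Set V}
    (hC : IsPerfectCode arc C) {u w v : V} (hu : u ∈ C) (hw : w ∈ C)
    (huv : u = v ∨ arc u v) (hwv : w = v ∨ arc w v) : u = w :=
  (hC v).unique ⟨hu, huv⟩ ⟨hw, hwv⟩

theorem dominates_cayArc_pair_iff {G : Type*} [AddCommGroup G] {s s' u v : G} :
    (u = v ∨ cayArc {s, s'} u v) ↔ u = v ∨ u = v - s ∨ u = v - s' := by
  simp only [cayArc, Set.mem_insert_iff, Set.mem_singleton_iff, sub_eq_iff_comm (a := v),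
    eq_comm (b := u)]

theorem IsPerfectCode.sub_mem_iff_of_cayArc_pair {G : Type*} [AddCommGroup G] {s s' : G}
    (hs' : s' ≠ 0) (hne : s ≠ s') {C : Set G} (hC : IsPerfectCode (cayArc {s, s'}) C) (v : G) :
    v - s' ∈ C ↔ v ∉ C ∧ v - s ∉ C := by
  have hdom (u : G) (hu : u = v ∨ u = v - s ∨ u = v - s') : u = v ∨ cayArc {s, s'} u v :=
    dominates_cayArc_pair_iff.2 hu
  constructor
  · intro hs'C
    refine ⟨fun hv => hs' ?_, fun hsC => hne ?_⟩
    · exact sub_eq_self.1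
        (hC.eq_of_dominates hv hs'C (hdom v (by simp)) (hdom (v - s') (by simp))).symm
    · exact sub_right_injective
        (hC.eq_of_dominates hsC hs'C (hdom (v - s) (by simp)) (hdom (v - s') (by simp)))
  · rintro ⟨hv, hsC⟩
    obtain ⟨u, ⟨hu, huv⟩, -⟩ := hC v
    rcases dominates_cayArc_pair_iff.1 huv with rfl | rfl | rfl
    exacts [(hv hu).elim, (hsC hu).elim, hu]

theorem IsPerfectCode.cayArc_pair_add_self_ne_zero {G : Type*} [AddCommGroup G] {s s' : G}
    (hs : s ≠ 0) (hs' : s' ≠ 0) (hne : s ≠ s') {C : Set G}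
    (hC : IsPerfectCode (cayArc {s, s'}) C) : s + s ≠ 0 := by
  intro hss
  have hsub_s' := hC.sub_mem_iff_of_cayArc_pair hs' hne
  have hsub_s : ∀ v, v - s ∈ C ↔ v ∉ C ∧ v - s' ∉ C :=
    (Set.pair_comm s s' ▸ hC).sub_mem_iff_of_cayArc_pair hs hne.symm
  have hinv (w : G) : w - s ∈ C ↔ w ∈ C := by
    have h₁ := hsub_s' (w + s')
    have h₂ := hsub_s' (w + s' - s)
    rw [add_sub_cancel_right] at h₁
    rw [show w + s' - s - s' = w - s by abel,
      show w + s' - s - s = w + s' by rw [sub_sub, hss, sub_zero]] at h₂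
    tauto
  have hempty (v : G) : v ∉ C := fun hv => ((hsub_s v).1 ((hinv v).2 hv)).1 hv
  exact hempty _ <| (hsub_s' 0).2 ⟨hempty 0, hempty _⟩

theorem statement4_general {G : Type*} [AddCommGroup G] (s s' : G)
    (hs : s ≠ 0) (hs' : s' ≠ 0) (hne : s ≠ s')
    (C : Set G) (hC : IsPerfectCode (cayArc {s, s'}) C) :
    addOrderOf s ≠ 2 ∧ addOrderOf s' ≠ 2 := by
  have hC' : IsPerfectCode (cayArc {s', s}) C := Set.pair_comm s s' ▸ hC
  exact ⟨fun h => hC.cayArc_pair_add_self_ne_zero hs hs' hne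
      (neg_eq_iff_add_eq_zero.1 (neg_eq_self_of_addOrderOf_eq_two h)),
    fun h => hC'.cayArc_pair_add_self_ne_zero hs' hs hne.symm
      (neg_eq_iff_add_eq_zero.1 (neg_eq_self_of_addOrderOf_eq_two h))⟩

theorem statement4 {G : Type*} [AddCommGroup G] [Fintype G] (s s' : G)
    (hs : s ≠ 0) (hs' : s' ≠ 0) (hne : s ≠ s')
    (hgen : AddSubgroup.closure {s, s'} = ⊤)
    (C : Set G) (hC : IsPerfectCode (cayArc {s, s'}) C) :
    addOrderOf s ≠ 2 ∧ addOrderOf s' ≠ 2 :=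
  statement4_general s s' hs hs' hne C hC
end

section
/- Let G be a finite abelian group generated by S = {s, s'} ⊆ G \ {0} with s ≠ s', and let C be a perfect code of the Cayley digraph Cay(G,S). If x ∈ C, then x + k·(s + s') ∈ C for every integer k. -/
/-!
A vertex `y + s + s'` of `Cay(G, {s, s'})` is dominated only by itself, `y + s'` and `y + s`.
If `y ∈ C`, the last two are excluded, since each is dominated both by itself and by `y`;
so `y + (s + s') ∈ C`. Iterating, and using that `s + s'` has finite order in the finite
group `G`, every translate of `x` by a multiple of `s + s'` lies in `C`.
-/

lemma add_zsmul_mem_of_add_mem {G : Type*} [AddGroup G] {C : Set G} {g : G}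
    (hg : IsOfFinAddOrder g) (hC : ∀ y ∈ C, y + g ∈ C) {x : G} (hx : x ∈ C) (k : ℤ) :
    x + k • g ∈ C := by
  have hnat (n : ℕ) : x + n • g ∈ C := by
    induction n with
    | zero => simpa using hx
    | succ n ih => simpa only [succ_nsmul, ← add_assoc] using hC _ ih
  obtain ⟨n, hn : n • g = k • g⟩ := (AddSubmonoid.mem_multiples_iff _ _).1
    (hg.mem_multiples_iff_mem_zmultiples.2 ⟨k, rfl⟩)
  exact hn ▸ hnat n

namespace IsPerfectCode

variable {G : Type*} [AddCommGroup G] {C : Set G}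

lemma add_notMem_s5 {S : Set G} (hC : IsPerfectCode (cayArc S) C) {x a : G} (hx : x ∈ C)
    (ha : a ∈ S) (ha0 : a ≠ 0) : x + a ∉ C := by
  intro hxa
  obtain ⟨u, -, huniq⟩ := hC (x + a)
  have hxu : x = u := huniq x ⟨hx, Or.inr (by simpa [cayArc] using ha)⟩
  have hxau : x + a = u := huniq (x + a) ⟨hxa, Or.inl rfl⟩
  exact ha0 (add_eq_left.mp (hxau.trans hxu.symm))

lemma add_add_mem_s5 {s s' : G} (hs : s ≠ 0) (hs' : s' ≠ 0)
    (hC : IsPerfectCode (cayArc {s, s'}) C) {y : G} (hy : y ∈ C) : y + (s + s') ∈ C := by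
  obtain ⟨u, ⟨huC, hdom⟩, -⟩ := hC (y + (s + s'))
  rcases hdom with rfl | hdom
  · exact huC
  obtain h | h : y + (s + s') - u = s ∨ y + (s + s') - u = s' := hdom
  · have hu : u = y + s' := by linear_combination (norm := abel) -h
    exact absurd (hu ▸ huC) (hC.add_notMem_s5 hy (by simp) hs')
  · have hu : u = y + s := by linear_combination (norm := abel) -h
    exact absurd (hu ▸ huC) (hC.add_notMem_s5 hy (by simp) hs)

end IsPerfectCode

theorem statement5_general {G : Type*} [AddCommGroup G] [Fintype G] (s s' : G)
    (hs : s ≠ 0) (hs' : s' ≠ 0)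
    (C : Set G) (hC : IsPerfectCode (cayArc {s, s'}) C)
    (x : G) (hx : x ∈ C) :
    ∀ k : ℤ, x + k • (s + s') ∈ C :=
  add_zsmul_mem_of_add_mem (isOfFinAddOrder_of_finite _)
    (fun _ hy => hC.add_add_mem_s5 hs hs' hy) hx

theorem statement5 {G : Type*} [AddCommGroup G] [Fintype G] (s s' : G)
    (hs : s ≠ 0) (hs' : s' ≠ 0) (hne : s ≠ s')
    (hgen : AddSubgroup.closure {s, s'} = ⊤)
    (C : Set G) (hC : IsPerfectCode (cayArc {s, s'}) C)
    (x : G) (hx : x ∈ C) :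
    ∀ k : ℤ, x + k • (s + s') ∈ C :=
  statement5_general s s' hs hs' C hC x hx
end

section
/- Let G be a finite abelian group generated by S = {s, s'} ⊆ G \ {0} with s ≠ s', and let C be a perfect code of the Cayley digraph Cay(G,S). If x ∈ C, then both x + 3s and x + 3s' belong to C. -/
/-!
A perfect code `C` of `Cay(G, S)` is characterised by: for every `v` there is exactly one
`t ∈ {0} ∪ S` with `v - t ∈ C`. For `S = {s, s'}` this forces, for `y ∈ C`, that `y + s` and
`y + s'` are not in `C`, hence `y + s + s' ∈ C`, and also `y + s - s' ∉ C`. Starting from `x ∈ C`: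
`x + s + s' ∈ C` gives `x + 2s ∉ C`, and as `x + s ∉ C` the vertex `x + 2s` must be dominated by
`x + 2s - s' ∈ C`, whence `x + 3s = (x + 2s - s') + s + s' ∈ C`.
-/

namespace IsPerfectCode

variable {G : Type*} [AddCommGroup G] {S C : Set G}

theorem exists_sub_mem (hC : IsPerfectCode (cayArc S) C) (v : G) :
    ∃ t ∈ insert 0 S, v - t ∈ C := by
  obtain ⟨u, ⟨hu, hdom⟩, -⟩ := hC v
  refine ⟨v - u, ?_, by rwa [sub_sub_cancel]⟩
  rcases hdom with rfl | huv
  · simp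
  · exact Set.mem_insert_of_mem _ huv

theorem eq_of_sub_mem (hC : IsPerfectCode (cayArc S) C) {v t t' : G}
    (ht : t ∈ insert 0 S) (ht' : t' ∈ insert 0 S) (hvt : v - t ∈ C) (hvt' : v - t' ∈ C) :
    t = t' := by
  have dominates : ∀ r ∈ insert 0 S, v - r = v ∨ cayArc S (v - r) v := by
    rintro r (rfl | hr)
    · simp
    · simpa [cayArc] using Or.inr hr
  exact sub_right_injective <| (hC v).unique ⟨hvt, dominates t ht⟩ ⟨hvt', dominates t' ht'⟩

variable {s s' : G} (hC : IsPerfectCode (cayArc {s, s'}) C)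
include hC

theorem add_notMem_of_mem (hs : s ≠ 0) {y : G} (hy : y ∈ C) : y + s ∉ C := fun hys =>
  hs <| hC.eq_of_sub_mem (v := y + s) (by simp) (by simp) (by simpa) (by simpa)

theorem add_sub_notMem_of_mem (hne : s ≠ s') {y : G} (hy : y ∈ C) : y + s - s' ∉ C := fun hy' =>
  hne <| hC.eq_of_sub_mem (v := y + s) (by simp) (by simp) (by simpa) hy'

theorem add_add_mem_of_mem (hs : s ≠ 0) (hs' : s' ≠ 0) {y : G} (hy : y ∈ C) :
    y + s + s' ∈ C := by
  have hy' : y + s' ∉ C := (Set.pair_comm s s' ▸ hC).add_notMem_of_mem hs' hy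
  obtain ⟨t, ht, hmem⟩ := hC.exists_sub_mem (y + s + s')
  simp only [Set.mem_insert_iff, Set.mem_singleton_iff] at ht
  rcases ht with rfl | rfl | rfl
  · simpa using hmem
  · exact absurd (by simpa [add_right_comm] using hmem) hy'
  · exact absurd (by simpa using hmem) (hC.add_notMem_of_mem hs hy)

theorem add_three_nsmul_mem_s7 (hs : s ≠ 0) (hs' : s' ≠ 0) (hne : s ≠ s') {x : G} (hx : x ∈ C) :
    x + 3 • s ∈ C := by
  have h2s : x + s + s ∉ C := by
    simpa [add_right_comm] using hC.add_sub_notMem_of_mem hne (hC.add_add_mem_of_mem hs hs' hx)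
  obtain ⟨t, ht, hmem⟩ := hC.exists_sub_mem (x + s + s)
  simp only [Set.mem_insert_iff, Set.mem_singleton_iff] at ht
  rcases ht with rfl | rfl | rfl
  · exact absurd (by simpa using hmem) h2s
  · exact absurd (by simpa using hmem) (hC.add_notMem_of_mem hs hx)
  · convert hC.add_add_mem_of_mem hs hs' hmem using 1
    abel

end IsPerfectCode

theorem statement7_general {G : Type*} [AddCommGroup G] (s s' : G)
    (hs : s ≠ 0) (hs' : s' ≠ 0) (hne : s ≠ s')
    (C : Set G) (hC : IsPerfectCode (cayArc {s, s'}) C)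
    (x : G) (hx : x ∈ C) :
    x + 3 • s ∈ C ∧ x + 3 • s' ∈ C :=
  ⟨hC.add_three_nsmul_mem_s7 hs hs' hne hx,
    (Set.pair_comm s s' ▸ hC).add_three_nsmul_mem_s7 hs' hs hne.symm hx⟩

theorem statement7 {G : Type*} [AddCommGroup G] [Fintype G] (s s' : G)
    (hs : s ≠ 0) (hs' : s' ≠ 0) (hne : s ≠ s')
    (hgen : AddSubgroup.closure {s, s'} = ⊤)
    (C : Set G) (hC : IsPerfectCode (cayArc {s, s'}) C)
    (x : G) (hx : x ∈ C) :
    x + 3 • s ∈ C ∧ x + 3 • s' ∈ C :=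
  statement7_general s s' hs hs' hne C hC x hx
end

section
/- Let m, l be positive integers and h an integer with 0 ≤ h < m such that 3 ∣ m and 3 ∣ (l − h), and set b = gcd(l − h, m). Then the set C = ⋃_{r ∈ {0,…,b/3 − 1}} C_r, where C_r = {((3r + t + n(l − h)) mod m, t) : n ∈ ℤ, t ∈ {0,…,l−1}}, is an independent set of Γ_{m,l,h}; that is, there is no arc of Γ_{m,l,h} between any two elements of C. -/
section Potential

variable {m l h k : ℕ}

def gammaPotential (hkm : k ∣ m) (x : ZMod m × Fin l) : ZMod k :=
  ZMod.castHom hkm (ZMod k) x.1 - ((x.2 : ℕ) : ZMod k)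

theorem gammaPotential_sub_eq_one_or_neg_one (hkm : k ∣ m) (hk : (k : ℤ) ∣ (l : ℤ) - h)
    {x y : ZMod m × Fin l} (hxy : gammaArc m l h x y) :
    gammaPotential hkm y - gammaPotential hkm x = 1 ∨
      gammaPotential hkm y - gammaPotential hkm x = -1 := by
  unfold gammaPotential
  rcases hxy with ⟨h1, h2⟩ | ⟨h1, h2⟩ | ⟨h1, h2, h3⟩
  · left
    rw [h1, h2, map_add, map_one]
    ring
  · right
    rw [h1, h2, Nat.cast_succ]
    ring
  · right
    have hhl : (h : ZMod k) = l := by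
      exact_mod_cast (ZMod.intCast_eq_intCast_iff_dvd_sub h l k).mpr hk
    have hl : (l : ZMod k) = (x.2 : ℕ) + 1 := by
      rw [← Nat.cast_succ]
      congr 1
      have := x.2.isLt
      omega
    rw [h2, h3, map_sub, map_natCast, Nat.cast_zero]
    linear_combination -hhl - hl

theorem gammaPotential_of_mem_Cr (hkm : k ∣ m) (hk : (k : ℤ) ∣ (l : ℤ) - h) {r : ℕ}
    {x : ZMod m × Fin l} (hx : x ∈ Cr m l h r) : gammaPotential hkm x = 3 * r := by
  obtain ⟨n, t, rfl⟩ := hx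
  have hhl : (h : ZMod k) = l := by
    exact_mod_cast (ZMod.intCast_eq_intCast_iff_dvd_sub h l k).mpr hk
  unfold gammaPotential
  simp only [map_add, map_sub, map_mul, map_intCast, map_natCast, map_ofNat]
  push_cast
  linear_combination -(n : ZMod k) * hhl

end Potential

theorem statement12_general (m l h : ℕ)
    (h3m : 3 ∣ m) (h3 : (3 : ℤ) ∣ ((l : ℤ) - (h : ℤ))) :
    ∀ x ∈ (⋃ r ∈ Finset.range (Int.gcd ((l : ℤ) - (h : ℤ)) (m : ℤ) / 3), Cr m l h r),
      ∀ y ∈ (⋃ r ∈ Finset.range (Int.gcd ((l : ℤ) - (h : ℤ)) (m : ℤ) / 3), Cr m l h r),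
        ¬ gammaArc m l h x y := by
  intro x hx y hy hxy
  simp only [Set.mem_iUnion] at hx hy
  obtain ⟨rx, -, hx⟩ := hx
  obtain ⟨ry, -, hy⟩ := hy
  have h30 : (3 : ZMod 3) = 0 := rfl
  have hstep := gammaPotential_sub_eq_one_or_neg_one h3m h3 hxy
  simp only [gammaPotential_of_mem_Cr h3m h3 hx, gammaPotential_of_mem_Cr h3m h3 hy, h30,
    zero_mul, sub_zero] at hstep
  revert hstep
  decide

theorem statement12 (m l h : ℕ) (hm : 0 < m) (hl : 0 < l) (hhm : h < m)
    (h3m : 3 ∣ m) (h3 : (3 : ℤ) ∣ ((l : ℤ) - (h : ℤ))) :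
    ∀ x ∈ (⋃ r ∈ Finset.range (Int.gcd ((l : ℤ) - (h : ℤ)) (m : ℤ) / 3), Cr m l h r),
      ∀ y ∈ (⋃ r ∈ Finset.range (Int.gcd ((l : ℤ) - (h : ℤ)) (m : ℤ) / 3), Cr m l h r),
        ¬ gammaArc m l h x y :=
  statement12_general m l h h3m h3
end

section
/- Let G be a finite abelian group generated by {s, s'} with s ≠ s' and s, s' ≠ 0, let m be the order of s, let l be the minimal positive integer with l·s' ∈ ⟨s⟩, and let h be the unique integer with 0 ≤ h < m and h·s + l·s' = 0. Then ⟨s⟩ ∩ ⟨s + s'⟩ = ⟨(l − h)·s⟩. -/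
/-!
A multiple `k • (s + s')` lies in `⟨s⟩` iff `k • s'` does, i.e. iff `l`, the order of `s'` modulo
`⟨s⟩`, divides `k`. Hence `⟨s⟩ ⊓ ⟨s + s'⟩ = ⟨l • (s + s')⟩`, and `l • (s + s') = (l - h) • s`
because `h • s = -(l • s')`.
-/

theorem addOrderOf_eq_of_isLeast {G : Type*} [AddMonoid G] {x : G} {l : ℕ}
    (hl : IsLeast {n : ℕ | 0 < n ∧ n • x = 0} l) : addOrderOf x = l :=
  (addOrderOf_eq_iff hl.1.1).2
    ⟨hl.1.2, fun _ hlt hpos hzero => (hl.2 ⟨hpos, hzero⟩).not_gt hlt⟩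

theorem AddSubgroup.inf_zmultiples {G : Type*} [AddCommGroup G] (H : AddSubgroup G) (g : G) :
    H ⊓ zmultiples g = zmultiples (addOrderOf (g : G ⧸ H) • g) := by
  ext x
  simp only [mem_inf, mem_zmultiples_iff]
  constructor
  · rintro ⟨hxH, k, rfl⟩
    have hdvd : (addOrderOf (g : G ⧸ H) : ℤ) ∣ k := by
      rw [addOrderOf_dvd_iff_zsmul_eq_zero, ← QuotientAddGroup.mk_zsmul,
        QuotientAddGroup.eq_zero_iff]
      exact hxH
    obtain ⟨q, rfl⟩ := hdvd
    exact ⟨q, by rw [← natCast_zsmul, ← mul_zsmul, mul_comm]⟩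
  · rintro ⟨q, rfl⟩
    refine ⟨zsmul_mem ?_ q, q * addOrderOf (g : G ⧸ H), by rw [mul_zsmul, natCast_zsmul]⟩
    rw [← QuotientAddGroup.eq_zero_iff, QuotientAddGroup.mk_nsmul, addOrderOf_nsmul_eq_zero]

theorem statement14_general {G : Type*} [AddCommGroup G] (s s' : G)
    (l h : ℕ)
    (hl : IsLeast {n : ℕ | 0 < n ∧ (n : ℤ) • s' ∈ AddSubgroup.zmultiples s} l)
    (hh : (h : ℤ) • s + (l : ℤ) • s' = 0) :
    AddSubgroup.zmultiples s ⊓ AddSubgroup.zmultiples (s + s') =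
      AddSubgroup.zmultiples ((((l : ℤ) - (h : ℤ))) • s) := by
  set H := AddSubgroup.zmultiples s
  have hmk : ((s + s' : G) : G ⧸ H) = (s' : G ⧸ H) := by
    rw [QuotientAddGroup.mk_add, (QuotientAddGroup.eq_zero_iff s).2 (AddSubgroup.mem_zmultiples s),
      zero_add]
  have horder : addOrderOf ((s + s' : G) : G ⧸ H) = l := by
    refine addOrderOf_eq_of_isLeast ?_
    convert hl using 4 with n
    rw [hmk, ← natCast_zsmul, ← QuotientAddGroup.mk_zsmul, QuotientAddGroup.eq_zero_iff]
  have hsmul : (l : ℤ) • (s + s') = ((l : ℤ) - h) • s := by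
    rw [sub_zsmul, eq_neg_of_add_eq_zero_left hh, neg_neg, smul_add]
  rw [H.inf_zmultiples, horder, ← natCast_zsmul, hsmul]

theorem statement14 {G : Type*} [AddCommGroup G] [Fintype G] (s s' : G)
    (hs : s ≠ 0) (hs' : s' ≠ 0) (hne : s ≠ s')
    (hgen : AddSubgroup.closure {s, s'} = ⊤)
    (m l h : ℕ) (hm : m = addOrderOf s)
    (hl : IsLeast {n : ℕ | 0 < n ∧ (n : ℤ) • s' ∈ AddSubgroup.zmultiples s} l)
    (hhm : h < m) (hh : (h : ℤ) • s + (l : ℤ) • s' = 0) :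
    AddSubgroup.zmultiples s ⊓ AddSubgroup.zmultiples (s + s') =
      AddSubgroup.zmultiples ((((l : ℤ) - (h : ℤ))) • s) :=
  statement14_general s s' l h hl hh
end

section
/- For all positive integers m, l and every integer h with 0 ≤ h < m, the digraph Γ_{m,l,h} is strongly connected; that is, for any two vertices x and y there is a directed path from x to y. -/
/-
The arcs move right along a row and up a column, and the top of every column wraps to the bottom
of another one. So any vertex climbs its column to the top, wraps to the bottom row, climbs to
the target's row and then walks around that row, a cycle of length `m`, to the target.
-/

namespace gammaArc

variable {m h : ℕ}

theorem reflTransGen_add_natCast {l : ℕ} (a : ZMod m) (b : Fin l) (k : ℕ) :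
    Relation.ReflTransGen (gammaArc m l h) (a, b) (a + k, b) := by
  induction k with
  | zero => simpa using Relation.ReflTransGen.refl
  | succ k ih => exact ih.tail (Or.inl ⟨by push_cast; ring, rfl⟩)

theorem reflTransGen_same_snd [NeZero m] {l : ℕ} (a a' : ZMod m) (b : Fin l) :
    Relation.ReflTransGen (gammaArc m l h) (a, b) (a', b) := by
  simpa using reflTransGen_add_natCast (h := h) a b (a' - a).val

theorem reflTransGen_same_fst_of_le {n : ℕ} (a : ZMod m) {b b' : Fin (n + 1)} (hbb' : b ≤ b') :
    Relation.ReflTransGen (gammaArc m (n + 1) h) (a, b) (a, b') := by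
  refine Relation.ReflTransGen.lift (fun i => (a, i)) (fun _ _ hij => hij) b b'
    (reflTransGen_of_succ_of_le (fun i j => gammaArc m (n + 1) h (a, i) (a, j)) ?_ hbb')
  intro i hi
  obtain ⟨j, rfl⟩ := Fin.eq_castSucc_of_ne_last (hi.2.trans_le (Fin.le_last b')).ne
  exact Or.inr (Or.inl ⟨rfl, by simp⟩)

theorem last_zero {n : ℕ} (a : ZMod m) :
    gammaArc m (n + 1) h (a, Fin.last n) (a - h, 0) :=
  Or.inr (Or.inr ⟨by simp, rfl, rfl⟩)

end gammaArc

theorem statement16_general (m l h : ℕ) (hm : 0 < m)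
    (x y : ZMod m × Fin l) :
    Relation.ReflTransGen (gammaArc m l h) x y := by
  have : NeZero m := ⟨hm.ne'⟩
  obtain ⟨n, rfl⟩ := Nat.exists_eq_add_one_of_ne_zero x.2.pos.ne'
  obtain ⟨a, b⟩ := x
  obtain ⟨c, d⟩ := y
  set R := Relation.ReflTransGen (gammaArc m (n + 1) h)
  calc R (a, b) (a, Fin.last n) := gammaArc.reflTransGen_same_fst_of_le a (Fin.le_last b)
    R _ (a - h, 0) := .single (gammaArc.last_zero a)
    R _ (a - h, d) := gammaArc.reflTransGen_same_fst_of_le _ (Fin.zero_le d)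
    R _ (c, d) := gammaArc.reflTransGen_same_snd _ _ d

theorem statement16 (m l h : ℕ) (hm : 0 < m) (hl : 0 < l) (hhm : h < m)
    (x y : ZMod m × Fin l) :
    Relation.ReflTransGen (gammaArc m l h) x y :=
  statement16_general m l h hm x y
end
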